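/- Gronwall-type decay: suppose φ : [0,∞) → [0,∞) is continuous and satisfies φ(r) ≤ C(1+r) + C r ∫₀^r φ(s)(1+s)^{-n/2-1} ds for all r ≥ 0, where n ≥ 2. Then there exists C' such that φ(r) ≤ C'(1+r) for all r ≥ 0. Consequently, if φ(r) = (1+r)^{n/2+1} F(r) then F(r) ≤ C'(1+r)^{-n/2}. -/

import Mathlib

/-!
Put `u r = ∫₀^r φ(s) (1+s)^(-a-1) ds` with `a = n/2`. Since `φ ≥ 0`, the hypothesis gives
`φ r ≤ C (1+r) (1 + u r)`, hence `u' ≤ C (1+r)^(-a) (1 + u)`, and Gronwall's argument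
(`(1 + u) · exp(-∫ C (1+s)^(-a))` is antitone) yields
`1 + u r ≤ exp (C ∫₀^r (1+s)^(-a) ds) ≤ exp (C / (a - 1))`, a bound uniform in `r` as `a > 1`.
-/

open Real Set

theorem le_mul_exp_integral_of_hasDerivAt {v v' k : ℝ → ℝ} {a b : ℝ} (hk : Continuous k)
    (hv : ∀ x, HasDerivAt v (v' x) x) (hle : ∀ x > a, v' x ≤ k x * v x) (hab : a ≤ b) :
    v b ≤ v a * exp (∫ s in a..b, k s) := by
  set K : ℝ → ℝ := fun x => ∫ s in a..x, k s
  have hK : ∀ x, HasDerivAt K (k x) x := fun x => (hk.integral_hasStrictDerivAt a x).hasDerivAt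
  have hderiv : ∀ x, HasDerivAt (fun x => v x * exp (-K x))
      (v' x * exp (-K x) + v x * (exp (-K x) * -k x)) x :=
    fun x => (hv x).mul (hK x).neg.exp
  have hanti : AntitoneOn (fun x => v x * exp (-K x)) (Ici a) := by
    refine antitoneOn_of_hasDerivWithinAt_nonpos (convex_Ici a)
      (fun x _ => (hderiv x).continuousAt.continuousWithinAt)
      (fun x _ => (hderiv x).hasDerivWithinAt) fun x hx => ?_
    rw [interior_Ici] at hx
    nlinarith [hle x hx, exp_pos (-K x)]
  have hmono : v b * exp (-K b) ≤ v a := by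
    simpa [K] using hanti self_mem_Ici hab hab
  calc v b = v b * exp (-K b) * exp (K b) := by rw [mul_assoc, ← exp_add]; simp
    _ ≤ v a * exp (K b) := by gcongr

theorem integral_comp_max_left_of_le {f : ℝ → ℝ} {a r : ℝ} (har : a ≤ r) :
    ∫ s in a..r, f (max a s) = ∫ s in a..r, f s :=
  intervalIntegral.integral_congr fun s hs => by
    rw [uIcc_of_le har] at hs
    simp only [max_eq_right hs.1]

theorem one_add_integral_le_exp_integral {φ c w : ℝ → ℝ} {a r : ℝ}
    (hφ : ContinuousOn φ (Ici a)) (hc : ContinuousOn c (Ici a)) (hw : ContinuousOn w (Ici a))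
    (hw0 : ∀ s ≥ a, 0 ≤ w s) (hle : ∀ s ≥ a, φ s ≤ c s * (1 + ∫ t in a..s, φ t * w t))
    (har : a ≤ r) :
    1 + ∫ s in a..r, φ s * w s ≤ exp (∫ s in a..r, c s * w s) := by
  -- extending by the value at `a` makes everything continuous on `ℝ`, where the FTC applies
  have hmax : Continuous fun s => max a s := continuous_const.max continuous_id
  have hext : ∀ {f : ℝ → ℝ}, ContinuousOn f (Ici a) → Continuous fun s => f (max a s) :=
    fun hf => hf.comp_continuous hmax fun s => le_max_left a s
  have hφw : Continuous fun s => φ (max a s) * w (max a s) := (hext hφ).mul (hext hw)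
  have key := le_mul_exp_integral_of_hasDerivAt (k := fun s => c (max a s) * w (max a s))
    ((hext hc).mul (hext hw))
    (v := fun x => 1 + ∫ s in a..x, φ (max a s) * w (max a s))
    (fun x => ((hφw.integral_hasStrictDerivAt a x).hasDerivAt).const_add 1)
    (fun x hx => by
      simp only [max_eq_right hx.le, integral_comp_max_left_of_le (f := fun s => φ s * w s) hx.le]
      nlinarith [hle x hx.le, hw0 x hx.le]) har
  simpa only [intervalIntegral.integral_same, add_zero, one_mul,
    integral_comp_max_left_of_le (f := fun s => φ s * w s) har,
    integral_comp_max_left_of_le (f := fun s => c s * w s) har] using key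

theorem integral_one_add_rpow_neg_le {a r : ℝ} (ha : 1 < a) (hr : 0 ≤ r) :
    ∫ s in (0 : ℝ)..r, (1 + s) ^ (-a) ≤ 1 / (a - 1) := by
  have hint : ∫ s in (0 : ℝ)..r, (1 + s) ^ (-a) = (1 - (1 + r) ^ (1 - a)) / (a - 1) := by
    rw [intervalIntegral.integral_comp_add_left (fun t => t ^ (-a)), integral_rpow]
    · rw [add_zero, one_rpow, div_eq_div_iff] <;> ring_nf <;> linarith
    · refine Or.inr ⟨by linarith, ?_⟩
      rw [uIcc_of_le (by linarith)]
      exact fun h => absurd h.1 (by norm_num)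
  rw [hint]
  exact div_le_div_of_nonneg_right (sub_le_self _ (rpow_nonneg (by linarith) _)) (by linarith)

theorem le_mul_one_add_of_le_integral {a C : ℝ} {φ : ℝ → ℝ} (ha : 1 < a) (hC : 0 ≤ C)
    (hφ : ContinuousOn φ (Ici 0)) (hφ0 : ∀ r ≥ (0 : ℝ), 0 ≤ φ r)
    (hineq : ∀ r ≥ (0 : ℝ), φ r ≤ C * (1 + r) + C * r * ∫ s in (0 : ℝ)..r, φ s * (1 + s) ^ (-a - 1))
    {r : ℝ} (hr : 0 ≤ r) :
    φ r ≤ C * exp (C / (a - 1)) * (1 + r) := by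
  set u : ℝ → ℝ := fun r => ∫ s in (0 : ℝ)..r, φ s * (1 + s) ^ (-a - 1)
  have hw0 : ∀ s ≥ (0 : ℝ), 0 ≤ (1 + s) ^ (-a - 1) := fun s hs => rpow_nonneg (by linarith) _
  have hu0 : ∀ r ≥ (0 : ℝ), 0 ≤ u r := fun r hr =>
    intervalIntegral.integral_nonneg hr fun s hs => mul_nonneg (hφ0 s hs.1) (hw0 s hs.1)
  have hφ_le : ∀ r ≥ (0 : ℝ), φ r ≤ C * (1 + r) * (1 + u r) := fun r hr => by
    nlinarith [hineq r hr, mul_nonneg hC (hu0 r hr)]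
  have hwc : ContinuousOn (fun s : ℝ => (1 + s) ^ (-a - 1)) (Ici 0) :=
    ContinuousOn.rpow_const (by fun_prop) fun s hs => Or.inl (by linarith [mem_Ici.mp hs])
  have hgron := one_add_integral_le_exp_integral hφ (by fun_prop) hwc hw0 hφ_le hr
  have hint_le : ∫ s in (0 : ℝ)..r, C * (1 + s) * (1 + s) ^ (-a - 1) ≤ C / (a - 1) := by
    have : ∫ s in (0 : ℝ)..r, C * (1 + s) * (1 + s) ^ (-a - 1)
        = C * ∫ s in (0 : ℝ)..r, (1 + s) ^ (-a) := by
      rw [← intervalIntegral.integral_const_mul]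
      refine intervalIntegral.integral_congr fun s hs => ?_
      rw [uIcc_of_le hr] at hs
      rw [mul_assoc, ← rpow_one_add' (by linarith [hs.1]) (by linarith)]
      ring_nf
    rw [this, div_eq_mul_one_div]
    exact mul_le_mul_of_nonneg_left (integral_one_add_rpow_neg_le ha hr) hC
  calc φ r ≤ C * (1 + r) * (1 + u r) := hφ_le r hr
    _ ≤ C * (1 + r) * exp (C / (a - 1)) := by
        gcongr
        exact hgron.trans (exp_le_exp.mpr hint_le)
    _ = C * exp (C / (a - 1)) * (1 + r) := by ring

theorem le_mul_rpow_neg_of_rpow_mul_le {x y K a : ℝ} (hx : 0 < x)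
    (h : x ^ (a + 1) * y ≤ K * x) : y ≤ K * x ^ (-a) := by
  rw [rpow_add hx, rpow_one] at h
  rw [rpow_neg hx.le, ← div_eq_mul_inv, le_div_iff₀ (rpow_pos_of_pos hx a)]
  nlinarith

/-- Gronwall-type decay: if `φ ≥ 0` is continuous on `[0,∞)` and
`φ(r) ≤ C(1+r) + C r ∫₀^r φ(s)(1+s)^{-n/2-1} ds` with `n ≥ 3`, then
`φ(r) ≤ C'(1+r)`; consequently if `φ(r) = (1+r)^{n/2+1}F(r)` then
`F(r) ≤ C'(1+r)^{-n/2}`. -/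
theorem stmt11 (n : ℕ) (hn : 3 ≤ n) (C : ℝ) (hC : 0 < C) (φ : ℝ → ℝ)
    (hcont : ContinuousOn φ (Set.Ici 0)) (hpos : ∀ r ≥ (0 : ℝ), 0 ≤ φ r)
    (hineq : ∀ r ≥ (0 : ℝ),
      φ r ≤ C * (1 + r) + C * r * ∫ s in (0 : ℝ)..r, φ s * (1 + s) ^ (-(n : ℝ) / 2 - 1)) :
    ∃ C' : ℝ, (∀ r ≥ (0 : ℝ), φ r ≤ C' * (1 + r)) ∧
      ∀ F : ℝ → ℝ, (∀ r, φ r = (1 + r) ^ ((n : ℝ) / 2 + 1) * F r) →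
        ∀ r ≥ (0 : ℝ), F r ≤ C' * (1 + r) ^ (-(n : ℝ) / 2) := by
  have ha : 1 < (n : ℝ) / 2 := by
    rw [lt_div_iff₀ two_pos]
    exact_mod_cast hn
  simp only [neg_div] at hineq ⊢
  have hlin := fun r (hr : 0 ≤ r) =>
    le_mul_one_add_of_le_integral ha hC.le hcont hpos hineq hr
  refine ⟨_, hlin, fun F hF r hr => le_mul_rpow_neg_of_rpow_mul_le (by linarith) ?_⟩
  rw [← hF]
  exact hlin r hr
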